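/- Counterexample to comparison with continuity: with Ω = B₁(0), 𝔞(x, φ) = φ(0), g ≡ 0, and X the set of bounded continuous functions, the function u(x) = (1 − |x|²)·1_{B₁(0)}(x) is a continuous classical subsolution and v(x) = (|x|² − 1)·1_{B₁(0)}(x) is a continuous classical supersolution, yet u ≥ v everywhere with strict inequality inside B₁(0). Hence no comparison principle holds even among continuous sub/supersolutions. -/
import Mathlib


open scoped Classical

/-- Counterexample to comparison with continuity.  With `Ω = B₁(0)`,
`𝔞(x, φ) = φ 0` and `g ≡ 0`, the function `u = (1 - |x|²)·1_{B₁}` is a continuous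
classical subsolution and `v = (|x|² - 1)·1_{B₁}` a continuous classical
supersolution, yet `u ≥ v` everywhere with strict inequality inside `B₁(0)`. -/
theorem stmt_14 (N : ℕ)
    (u v : EuclideanSpace ℝ (Fin N) → ℝ)
    (hu : ∀ x, u x = if x ∈ Metric.ball (0 : EuclideanSpace ℝ (Fin N)) 1
      then 1 - ‖x‖ ^ 2 else 0)
    (hv : ∀ x, v x = if x ∈ Metric.ball (0 : EuclideanSpace ℝ (Fin N)) 1
      then ‖x‖ ^ 2 - 1 else 0) :
    Continuous u ∧ Continuous v ∧
    -- u is a classical subsolution (g ≡ 0, 𝔞(x, φ) = φ 0)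
    (∀ x ∉ Metric.ball (0 : EuclideanSpace ℝ (Fin N)) 1, u x ≤ 0) ∧
    (∀ x ∈ Metric.ball (0 : EuclideanSpace ℝ (Fin N)) 1, u x ≤ u 0) ∧
    -- v is a classical supersolution
    (∀ x ∉ Metric.ball (0 : EuclideanSpace ℝ (Fin N)) 1, 0 ≤ v x) ∧
    (∀ x ∈ Metric.ball (0 : EuclideanSpace ℝ (Fin N)) 1, v 0 ≤ v x) ∧
    -- yet u dominates v, strictly inside the ball
    (∀ x, v x ≤ u x) ∧
    (∀ x ∈ Metric.ball (0 : EuclideanSpace ℝ (Fin N)) 1, v x < u x) := by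
  have hmem : ∀ x : EuclideanSpace ℝ (Fin N),
      x ∈ Metric.ball (0 : EuclideanSpace ℝ (Fin N)) 1 ↔ ‖x‖ < 1 := by
    intro x
    simp [Metric.mem_ball, dist_eq_norm]
  have hueq : u = fun x => max (1 - ‖x‖ ^ 2) 0 := by
    funext x
    rw [hu x]
    by_cases h : x ∈ Metric.ball (0 : EuclideanSpace ℝ (Fin N)) 1
    · have hx : ‖x‖ < 1 := (hmem x).1 h
      have : ‖x‖ ^ 2 < 1 := by
        calc ‖x‖ ^ 2 ≤ ‖x‖ := by nlinarith [norm_nonneg x]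
        _ < 1 := hx
      simp [h, le_of_lt (by linarith : (0 : ℝ) < 1 - ‖x‖ ^ 2)]
    · have hx : ¬ ‖x‖ < 1 := fun h' => h ((hmem x).2 h')
      push_neg at hx
      have : (1 : ℝ) ≤ ‖x‖ ^ 2 := by nlinarith
      simp [h, max_eq_right (by linarith : 1 - ‖x‖ ^ 2 ≤ (0 : ℝ))]
  have hveq : ∀ x, v x = -(u x) := by
    intro x
    rw [hu x, hv x]
    by_cases h : x ∈ Metric.ball (0 : EuclideanSpace ℝ (Fin N)) 1 <;> simp [h]
  have hcu : Continuous u := by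
    rw [hueq]
    exact (continuous_const.sub ((continuous_norm).pow 2)).max continuous_const
  have hu0 : u 0 = 1 := by
    rw [hu 0]
    simp
  have hunonneg : ∀ x, 0 ≤ u x := by
    intro x; rw [hueq]; exact le_max_right _ _
  refine ⟨hcu, ?_, ?_, ?_, ?_, ?_, ?_, ?_⟩
  · have : v = fun x => -(u x) := funext hveq
    rw [this]; exact hcu.neg
  · intro x hx
    rw [hu x, if_neg hx]
  · intro x hx
    rw [hu0, hueq]
    have hx' : ‖x‖ < 1 := (hmem x).1 hx
    have : ‖x‖ ^ 2 < 1 := by nlinarith [norm_nonneg x]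
    simp only []
    have h0 : (0:ℝ) ≤ 1 := by norm_num
    exact max_le (by linarith [sq_nonneg ‖x‖]) h0
  · intro x hx
    rw [hveq x, hu x, if_neg hx, neg_zero]
  · intro x hx
    rw [hveq x, hveq 0, neg_le_neg_iff]
    rw [hu0, hueq]
    have hx' : ‖x‖ < 1 := (hmem x).1 hx
    have : ‖x‖ ^ 2 < 1 := by nlinarith [norm_nonneg x]
    exact max_le (by linarith [sq_nonneg ‖x‖]) (by norm_num)
  · intro x
    rw [hveq x]
    have := hunonneg x
    linarith
  · intro x hx
    rw [hveq x]
    have hx' : ‖x‖ < 1 := (hmem x).1 hx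
    have h2 : ‖x‖ ^ 2 < 1 := by nlinarith [norm_nonneg x]
    have : 0 < u x := by
      rw [hu x, if_pos hx]; linarith
    linarith
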